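/- There exists a constant c > 0 such that for all real X, Y with 3/2 ≤ X ≤ Y, putting Q = (1/2)√(XY), one has ∑_{1≤q≤Q} (φ(q)/q)·∫_{−Q/(XY)}^{Q/(XY)} |w_q(γ)|² dγ ≤ c·X·Y·log X. -/

import Mathlib

open Real

/-- `w_q(γ) = ∑_{0 < |x| ≤ X/q} sin(π(2⌊Y⌋+1)γx)/sin(πγx)`, each summand read as the
Dirichlet kernel value `2⌊Y⌋+1` when `sin(πγx) = 0`. -/
noncomputable def w (X Y : ℝ) (q : ℕ) (γ : ℝ) : ℝ :=
  ∑ x ∈ (Finset.Icc (-⌊X / (q : ℝ)⌋) ⌊X / (q : ℝ)⌋).erase 0,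
    if Real.sin (Real.pi * γ * x) = 0 then 2 * (⌊Y⌋ : ℝ) + 1
    else Real.sin (Real.pi * (2 * (⌊Y⌋ : ℝ) + 1) * γ * x) / Real.sin (Real.pi * γ * x)

/-!
Each summand of `w_q` is a Dirichlet kernel `D_n(γx) = sin(πnγx) / sin(πγx)` with `n = 2⌊Y⌋ + 1`.
On `|t| ≤ 1/2` one has `|D_n(t)| ≤ n` and `|D_n(t)| ≤ 1/(2|t|)`, hence
`D_n(t)² ≤ 2n² / (1 + (2nt)²)`, and integrating this `arctan` derivative gives
`∫_{-δ}^{δ} D_n(γx)² dγ ≤ πn/|x|` as long as `δ|x| ≤ 1/2`. Cauchy–Schwarz with weights `|x|^{-1/2}`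
then bounds `∫ w_q²` by `πn (∑_{0<|x|≤X/q} |x|^{-1/2})² ≤ 16πn X/q`, with no logarithmic loss.
Since `φ(q)/q ≤ 1`, `X · Q/(XY) ≤ 1/2` and `w_q = 0` for `q > X`, the sum over `q` is a harmonic
sum, at most `1 + log X`.
-/

open MeasureTheory Finset

noncomputable def dirichletKernel (n : ℕ) (t : ℝ) : ℝ :=
  if sin (π * t) = 0 then n else sin (π * n * t) / sin (π * t)

lemma abs_sin_nat_mul_le (n : ℕ) (θ : ℝ) : |sin (n * θ)| ≤ n * |sin θ| := by
  induction n with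
  | zero => simp
  | succ n ih =>
    calc |sin ((n + 1 : ℕ) * θ)| = |sin (n * θ) * cos θ + cos (n * θ) * sin θ| := by
          push_cast; rw [add_mul, one_mul, sin_add]
      _ ≤ |sin (n * θ)| * |cos θ| + |cos (n * θ)| * |sin θ| := by
          rw [← abs_mul, ← abs_mul]; exact abs_add_le _ _
      _ ≤ n * |sin θ| * 1 + 1 * |sin θ| := by
          gcongr <;> exact abs_cos_le_one _
      _ = ((n + 1 : ℕ) : ℝ) * |sin θ| := by push_cast; ring

lemma measurable_dirichletKernel (n : ℕ) : Measurable (dirichletKernel n) :=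
  Measurable.ite (measurableSet_eq_fun (by fun_prop) measurable_const) measurable_const
    (by fun_prop)

lemma abs_dirichletKernel_le (n : ℕ) (t : ℝ) : |dirichletKernel n t| ≤ n := by
  unfold dirichletKernel
  split_ifs with h
  · simp
  · rw [abs_div, div_le_iff₀ (abs_pos.mpr h), mul_comm π, mul_assoc]
    exact abs_sin_nat_mul_le n _

lemma two_mul_abs_mul_abs_dirichletKernel_le (n : ℕ) {t : ℝ} (ht : |t| ≤ 1 / 2) :
    2 * |t| * |dirichletKernel n t| ≤ 1 := by
  have hsin : 2 * |t| ≤ |sin (π * t)| := by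
    have := mul_abs_le_abs_sin (x := π * t) (by rw [abs_mul, abs_of_pos pi_pos]; nlinarith [pi_pos])
    rwa [abs_mul, abs_of_pos pi_pos, ← mul_assoc, div_mul_cancel₀ _ pi_ne_zero] at this
  unfold dirichletKernel
  split_ifs with h
  · rw [h, abs_zero] at hsin
    simp [abs_nonpos_iff.mp (by linarith : |t| ≤ 0)]
  · rw [abs_div, ← mul_div_assoc, div_le_one (abs_pos.mpr h)]
    calc 2 * |t| * |sin (π * n * t)| ≤ |sin (π * t)| * 1 :=
          mul_le_mul hsin (abs_sin_le_one _) (abs_nonneg _) (abs_nonneg _)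
      _ = |sin (π * t)| := mul_one _

lemma dirichletKernel_sq_mul_le (n : ℕ) {t : ℝ} (ht : |t| ≤ 1 / 2) :
    dirichletKernel n t ^ 2 * (1 + (2 * n * t) ^ 2) ≤ 2 * (n : ℝ) ^ 2 := by
  have h₁ := abs_dirichletKernel_le n t
  have h₂ := two_mul_abs_mul_abs_dirichletKernel_le n ht
  have h₁' : dirichletKernel n t ^ 2 ≤ n ^ 2 := by
    rw [← sq_abs]; exact pow_le_pow_left₀ (abs_nonneg _) h₁ 2
  have h₂' : (2 * |t| * |dirichletKernel n t|) ^ 2 ≤ 1 := by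
    rw [sq_le_one_iff_abs_le_one, abs_of_nonneg (by positivity)]; exact h₂
  calc dirichletKernel n t ^ 2 * (1 + (2 * (n : ℝ) * t) ^ 2)
      = dirichletKernel n t ^ 2 + (n : ℝ) ^ 2 * (2 * |t| * |dirichletKernel n t|) ^ 2 := by
        simp only [mul_pow, sq_abs]; ring
    _ ≤ (n : ℝ) ^ 2 + (n : ℝ) ^ 2 * 1 := by gcongr
    _ = 2 * n ^ 2 := by ring

lemma intervalIntegrable_dirichletKernel_mul_sq (n : ℕ) (c a b : ℝ) :
    IntervalIntegrable (fun γ => dirichletKernel n (γ * c) ^ 2) volume a b := by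
  have hm : Measurable fun γ => dirichletKernel n (γ * c) ^ 2 :=
    ((measurable_dirichletKernel n).comp (measurable_mul_const c)).pow_const 2
  refine (intervalIntegrable_const (μ := (volume : Measure ℝ)) (c := (n : ℝ) ^ 2)).mono_fun
    hm.aestronglyMeasurable (Filter.Eventually.of_forall fun γ => ?_)
  simp only [norm_pow, Real.norm_eq_abs]
  exact pow_le_pow_left₀ (abs_nonneg _) ((abs_dirichletKernel_le n _).trans (le_abs_self _)) 2

lemma integral_dirichletKernel_mul_sq_le (n : ℕ) {a c : ℝ} (ha : 0 ≤ a) (hc : c ≠ 0)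
    (hac : a * |c| ≤ 1 / 2) :
    ∫ γ in -a..a, dirichletKernel n (γ * c) ^ 2 ≤ π * n / |c| := by
  rcases n.eq_zero_or_pos with rfl | hn
  · simp [dirichletKernel]
  set b := 2 * n * |c| with hb_def
  have hb : 0 < b := by positivity
  have hpt : ∀ γ ∈ Set.Icc (-a) a,
      dirichletKernel n (γ * c) ^ 2 ≤ 2 * n ^ 2 * (1 / (1 + (b * γ) ^ 2)) := by
    rintro γ ⟨hγ₁, hγ₂⟩
    have hγc : |γ * c| ≤ 1 / 2 := by
      rw [abs_mul]; exact le_trans (by gcongr; exact abs_le.mpr ⟨hγ₁, hγ₂⟩) hac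
    rw [mul_one_div, le_div_iff₀ (by positivity)]
    have hbγ : (b * γ) ^ 2 = (2 * n * (γ * c)) ^ 2 := by
      rw [hb_def]; simp only [mul_pow, sq_abs]; ring
    rw [hbγ]
    exact dirichletKernel_sq_mul_le n hγc
  calc ∫ γ in -a..a, dirichletKernel n (γ * c) ^ 2
      ≤ ∫ γ in -a..a, 2 * n ^ 2 * (1 / (1 + (b * γ) ^ 2)) :=
        intervalIntegral.integral_mono_on (by linarith)
          (intervalIntegrable_dirichletKernel_mul_sq n c _ _)
          (Continuous.intervalIntegrable (continuous_const.mul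
            (continuous_const.div (by fun_prop) fun γ => by positivity)) _ _) hpt
    _ = 2 * n ^ 2 * (b⁻¹ * (arctan (b * a) - arctan (b * -a))) := by
        rw [intervalIntegral.integral_const_mul,
          intervalIntegral.integral_comp_mul_left (fun u => 1 / (1 + u ^ 2)) hb.ne',
          integral_one_div_one_add_sq, smul_eq_mul]
    _ ≤ 2 * n ^ 2 * (b⁻¹ * π) := by
        gcongr
        linarith [arctan_lt_pi_div_two (b * a), neg_pi_div_two_lt_arctan (b * -a)]
    _ = π * n / |c| := by
        rw [hb_def]; field_simp

lemma sum_inv_sqrt_abs_le (m : ℕ) :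
    ∑ x ∈ (Icc (-(m : ℤ)) m).erase 0, (√|(x : ℝ)|)⁻¹ ≤ 4 * √m := by
  induction m with
  | zero => simp
  | succ m ih =>
    have hset : (Icc (-((m + 1 : ℕ) : ℤ)) (m + 1 : ℕ)).erase 0
        = insert ((m : ℤ) + 1) (insert (-((m : ℤ) + 1)) ((Icc (-(m : ℤ)) m).erase 0)) := by
      ext x; simp only [mem_erase, mem_Icc, mem_insert]; omega
    have hstep : (√((m : ℝ) + 1))⁻¹ ≤ 2 * (√((m : ℝ) + 1) - √m) := by
      have h₁ : 0 < √((m : ℝ) + 1) := Real.sqrt_pos.mpr (by positivity)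
      rw [inv_le_iff_one_le_mul₀ h₁]
      nlinarith [Real.sq_sqrt (by positivity : (0 : ℝ) ≤ m + 1),
        Real.sq_sqrt (by positivity : (0 : ℝ) ≤ m), Real.sqrt_nonneg (m : ℝ),
        sq_nonneg (√((m : ℝ) + 1) - √m)]
    rw [hset, sum_insert (by simp; omega), sum_insert (by simp)]
    have habs : |(((-((m : ℤ) + 1)) : ℤ) : ℝ)| = (m : ℝ) + 1 := by
      push_cast; rw [abs_neg]; exact abs_of_pos (by positivity)
    have habs' : |(((m : ℤ) + 1 : ℤ) : ℝ)| = (m : ℝ) + 1 := by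
      push_cast; exact abs_of_pos (by positivity)
    rw [habs, habs']
    push_cast
    linarith

lemma integral_sq_sum_dirichletKernel_le (n m : ℕ) {a : ℝ} (ha : 0 ≤ a) (hma : m * a ≤ 1 / 2) :
    ∫ γ in -a..a, (∑ x ∈ (Icc (-(m : ℤ)) m).erase 0, dirichletKernel n (γ * x)) ^ 2
      ≤ 16 * π * n * m := by
  set s := (Icc (-(m : ℤ)) m).erase 0
  set S := ∑ x ∈ s, (√|(x : ℝ)|)⁻¹
  have hs : ∀ x ∈ s, 0 < |(x : ℝ)| ∧ |(x : ℝ)| ≤ m := by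
    intro x hx
    simp only [s, mem_erase, mem_Icc] at hx
    refine ⟨abs_pos.mpr (Int.cast_ne_zero.mpr hx.1), ?_⟩
    rw [← Int.cast_abs]; exact_mod_cast abs_le.mpr hx.2
  have hCS : ∀ γ, (∑ x ∈ s, dirichletKernel n (γ * x)) ^ 2
      ≤ S * ∑ x ∈ s, √|(x : ℝ)| * dirichletKernel n (γ * x) ^ 2 := fun γ =>
    sum_sq_le_sum_mul_sum_of_sq_le_mul s (fun _ _ => by positivity) (fun _ _ => by positivity)
      fun x hx => by
        rw [← mul_assoc, inv_mul_cancel₀ (Real.sqrt_pos.mpr (hs x hx).1).ne', one_mul]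
  have hint_term : ∀ x ∈ s, IntervalIntegrable
      (fun γ => √|(x : ℝ)| * dirichletKernel n (γ * x) ^ 2) volume (-a) a := fun x _ =>
    (intervalIntegrable_dirichletKernel_mul_sq n x _ _).const_mul _
  have hint : IntervalIntegrable
      (fun γ => S * ∑ x ∈ s, √|(x : ℝ)| * dirichletKernel n (γ * x) ^ 2) volume (-a) a := by
    refine IntervalIntegrable.const_mul ?_ S
    simpa only [sum_fn] using IntervalIntegrable.sum s hint_term
  calc ∫ γ in -a..a, (∑ x ∈ s, dirichletKernel n (γ * x)) ^ 2
      ≤ ∫ γ in -a..a, S * ∑ x ∈ s, √|(x : ℝ)| * dirichletKernel n (γ * x) ^ 2 := by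
        refine intervalIntegral.integral_mono_on (by linarith) ?_ hint fun γ _ => hCS γ
        refine hint.mono_fun ((measurable_sum s fun x _ => (measurable_dirichletKernel n).comp
          (measurable_mul_const _)).pow_const 2).aestronglyMeasurable
          (Filter.Eventually.of_forall fun γ => ?_)
        simp only [Real.norm_eq_abs]
        rw [abs_of_nonneg (sq_nonneg _)]
        exact (hCS γ).trans (le_abs_self _)
    _ = S * ∑ x ∈ s, √|(x : ℝ)| * ∫ γ in -a..a, dirichletKernel n (γ * x) ^ 2 := by
        rw [intervalIntegral.integral_const_mul, intervalIntegral.integral_finsetSum hint_term]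
        simp_rw [intervalIntegral.integral_const_mul]
    _ ≤ S * ∑ x ∈ s, √|(x : ℝ)| * (π * n / |(x : ℝ)|) := by
        gcongr with x hx
        refine integral_dirichletKernel_mul_sq_le n ha (abs_pos.mp (hs x hx).1) ?_
        nlinarith [(hs x hx).2]
    _ = π * n * S ^ 2 := by
        simp_rw [mul_div_left_comm _ (π * n), Real.sqrt_div_self', ← mul_sum, one_div]
        ring
    _ ≤ π * n * (4 * √m) ^ 2 := by
        gcongr
        exact sum_inv_sqrt_abs_le m
    _ = 16 * π * n * m := by
        rw [mul_pow, Real.sq_sqrt (Nat.cast_nonneg m)]; ring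

lemma w_eq_sum_dirichletKernel {X Y : ℝ} (hX : 0 ≤ X) (hY : 0 ≤ Y) (q : ℕ) (γ : ℝ) :
    w X Y q γ = ∑ x ∈ (Icc (-(⌊X / q⌋₊ : ℤ)) ⌊X / q⌋₊).erase 0,
      dirichletKernel (2 * ⌊Y⌋₊ + 1) (γ * x) := by
  rw [w, Int.natCast_floor_eq_floor (by positivity)]
  refine sum_congr rfl fun x _ => ?_
  simp only [dirichletKernel, ← natCast_floor_eq_intCast_floor hY, mul_assoc]
  push_cast
  rfl

lemma sum_floor_div_le {X : ℝ} (hX : 1 ≤ X) (N : ℕ) :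
    ∑ q ∈ Icc 1 N, (⌊X / q⌋₊ : ℝ) ≤ X * (1 + log X) := by
  have hsupp : ∑ q ∈ Icc 1 N, ⌊X / q⌋₊ ≤ ∑ q ∈ Icc 1 ⌊X⌋₊, ⌊X / q⌋₊ := by
    refine sum_le_sum_of_ne_zero fun q hq hne => ?_
    rw [mem_Icc] at hq ⊢
    have hq0 : (0 : ℝ) < q := by exact_mod_cast hq.1
    refine ⟨hq.1, Nat.le_floor ?_⟩
    have := Nat.floor_eq_zero.not.mp hne
    rw [not_lt, le_div_iff₀ hq0, one_mul] at this
    exact this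
  have hfloor : (0 : ℝ) < ⌊X⌋₊ := by exact_mod_cast Nat.floor_pos.mpr hX
  calc ∑ q ∈ Icc 1 N, (⌊X / q⌋₊ : ℝ) ≤ ∑ q ∈ Icc 1 ⌊X⌋₊, (⌊X / q⌋₊ : ℝ) := by
        exact_mod_cast hsupp
    _ ≤ ∑ q ∈ Icc 1 ⌊X⌋₊, X * (q : ℝ)⁻¹ :=
        sum_le_sum fun q _ => (Nat.floor_le (by positivity)).trans_eq (div_eq_mul_inv _ _)
    _ = X * harmonic ⌊X⌋₊ := by
        rw [← mul_sum, harmonic_eq_sum_Icc]; push_cast; rfl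
    _ ≤ X * (1 + log ⌊X⌋₊) := by
        gcongr; exact harmonic_le_one_add_log _
    _ ≤ X * (1 + log X) := by
        gcongr; exact Nat.floor_le (by positivity)

lemma integral_w_sq_le {X Y δ : ℝ} (hX : 0 ≤ X) (hY : 0 ≤ Y) (hδ : 0 ≤ δ) (hXδ : X * δ ≤ 1 / 2)
    (q : ℕ) : ∫ γ in -δ..δ, w X Y q γ ^ 2 ≤ 16 * π * (2 * Y + 1) * ⌊X / q⌋₊ := by
  have hmδ : (⌊X / q⌋₊ : ℝ) * δ ≤ 1 / 2 := by
    refine le_trans (mul_le_mul_of_nonneg_right ?_ hδ) hXδ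
    rw [Nat.floor_div_natCast]
    exact (Nat.cast_le.mpr (Nat.div_le_self _ _)).trans (Nat.floor_le hX)
  simp_rw [w_eq_sum_dirichletKernel hX hY]
  refine (integral_sq_sum_dirichletKernel_le _ _ hδ hmδ).trans ?_
  gcongr
  push_cast
  linarith [Nat.floor_le hY]

lemma mul_sqrt_mul_div_two_div_mul_le {X Y : ℝ} (hX : 0 < X) (hXY : X ≤ Y) :
    X * (√(X * Y) / 2 / (X * Y)) ≤ 1 / 2 := by
  have hY : 0 < Y := hX.trans_le hXY
  have hsqrt : √(X * Y) ≤ Y := Real.sqrt_le_iff.mpr ⟨hY.le, by nlinarith⟩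
  calc X * (√(X * Y) / 2 / (X * Y)) = √(X * Y) / (2 * Y) := by field_simp
    _ ≤ 1 / 2 := by rw [div_le_iff₀ (by positivity)]; linarith

theorem stmt8 :
    ∃ c > 0, ∀ X Y : ℝ, 3 / 2 ≤ X → X ≤ Y →
      ∑ q ∈ Finset.Icc 1 ⌊Real.sqrt (X * Y) / 2⌋₊, (Nat.totient q : ℝ) / q *
          ∫ γ in (-((Real.sqrt (X * Y) / 2) / (X * Y)))..((Real.sqrt (X * Y) / 2) / (X * Y)),
            (w X Y q γ) ^ 2 ≤
        c * X * Y * Real.log X := by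
  refine ⟨192 * π, by positivity, fun X Y hX hXY => ?_⟩
  set δ := (√(X * Y) / 2) / (X * Y)
  have hX0 : 0 < X := by linarith
  have hY0 : 0 < Y := by linarith
  have hδ : 0 ≤ δ := by positivity
  have hXδ : X * δ ≤ 1 / 2 := mul_sqrt_mul_div_two_div_mul_le hX0 hXY
  have hlog : 1 ≤ 3 * log X := by
    have : X⁻¹ ≤ 2 / 3 := by rw [inv_le_comm₀ hX0 (by norm_num)]; linarith
    linarith [one_sub_inv_le_log_of_pos hX0]
  calc _ ≤ ∑ q ∈ Icc 1 ⌊√(X * Y) / 2⌋₊, 48 * π * Y * (⌊X / q⌋₊ : ℝ) := by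
        refine sum_le_sum fun q _ => ?_
        calc (q.totient : ℝ) / q * ∫ γ in -δ..δ, w X Y q γ ^ 2
            ≤ 1 * (16 * π * (2 * Y + 1) * ⌊X / q⌋₊) := by
              gcongr
              · exact intervalIntegral.integral_nonneg (by linarith) fun _ _ => sq_nonneg _
              · exact div_le_one_of_le₀ (by exact_mod_cast Nat.totient_le q) (Nat.cast_nonneg q)
              · exact integral_w_sq_le hX0.le hY0.le hδ hXδ q
          _ ≤ 16 * π * (3 * Y) * ⌊X / q⌋₊ := by rw [one_mul]; gcongr; linarith
          _ = 48 * π * Y * ⌊X / q⌋₊ := by ring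
    _ = 48 * π * Y * ∑ q ∈ Icc 1 ⌊√(X * Y) / 2⌋₊, (⌊X / q⌋₊ : ℝ) := by rw [mul_sum]
    _ ≤ 48 * π * Y * (X * (1 + log X)) := by gcongr; exact sum_floor_div_le (by linarith) _
    _ = 48 * π * X * Y * (1 + log X) := by ring
    _ ≤ 48 * π * X * Y * (4 * log X) := by gcongr; linarith
    _ = 192 * π * X * Y * log X := by ring
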